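/- arXiv:2601.10969 — 5 statements merged into one kernel-verified Lean document; each statement's English description precedes it below -/
import Mathlib

section
/- Let j, k be positive integers with j + k = 4, and let p ≥ 5 be a prime. Then (2p^k + 4p^j - 4)/((2p^j - 1)(2p^j - 4)) is not an integer, i.e., (2p^j - 1)(2p^j - 4) does not divide 2p^k + 4p^j - 4. -/
/-!
For `j = 1` the factor `2p - 1` would have to divide `2p³ + 4p - 4`, and modulo `2p - 1`
four times this number is `-7`; but `2p - 1 ≥ 9`. For `j ≥ 2` we have `k ≤ j`, and with
`x = p ^ j ≥ 4` the divisor `(2x - 1)(2x - 4)` is quadratic in `x` while the positive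
dividend is at most `6x - 4`.
-/

lemma dvd_seven_of_two_mul_sub_one_dvd {p : ℤ} (h : 2 * p - 1 ∣ 2 * p ^ 3 + 4 * p - 4) :
    2 * p - 1 ∣ 7 := by
  obtain ⟨c, hc⟩ := h
  exact ⟨4 * p ^ 2 + 2 * p + 9 - 4 * c, by linear_combination -4 * hc⟩

lemma not_dvd_two_mul_pow_three_add_four_mul_sub_four {p : ℤ} (hp : 5 ≤ p) :
    ¬ (2 * p - 1) * (2 * p - 4) ∣ 2 * p ^ 3 + 4 * p - 4 := by
  intro h
  have h7 := dvd_seven_of_two_mul_sub_one_dvd (dvd_of_mul_right_dvd h)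
  have := Int.le_of_dvd (by norm_num) h7
  omega

lemma not_dvd_two_mul_add_four_mul_sub_four_of_le {x y : ℤ} (hx : 4 ≤ x) (hy : 0 < y)
    (hyx : y ≤ x) :
    ¬ (2 * x - 1) * (2 * x - 4) ∣ 2 * y + 4 * x - 4 := by
  intro h
  have := Int.le_of_dvd (by linarith) h
  nlinarith

theorem stmt_0_general (p j k : ℕ) (hp5 : 5 ≤ p)
    (hj : 0 < j) (hjk : j + k = 4) :
    ¬ ((2 * (p : ℤ) ^ j - 1) * (2 * (p : ℤ) ^ j - 4) ∣
        2 * (p : ℤ) ^ k + 4 * (p : ℤ) ^ j - 4) := by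
  have hp : (5 : ℤ) ≤ p := by exact_mod_cast hp5
  obtain rfl | hj2 : j = 1 ∨ 2 ≤ j := by omega
  · obtain rfl : k = 3 := by omega
    simpa using not_dvd_two_mul_pow_three_add_four_mul_sub_four hp
  · have hx : (4 : ℤ) ≤ (p : ℤ) ^ j :=
      calc (4 : ℤ) ≤ (p : ℤ) ^ 1 := by linarith
        _ ≤ (p : ℤ) ^ j := pow_le_pow_right₀ (by linarith) (by omega)
    exact not_dvd_two_mul_add_four_mul_sub_four_of_le hx (by positivity)
      (pow_le_pow_right₀ (by linarith) (by omega))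

theorem stmt_0 (p j k : ℕ) (hp : p.Prime) (hp5 : 5 ≤ p)
    (hj : 0 < j) (hk : 0 < k) (hjk : j + k = 4) :
    ¬ ((2 * (p : ℤ) ^ j - 1) * (2 * (p : ℤ) ^ j - 4) ∣
        2 * (p : ℤ) ^ k + 4 * (p : ℤ) ^ j - 4) :=
  stmt_0_general p j k hp5 hj hjk
end

section
/- Let j, k be positive integers with j + k = 4, and let p ≥ 5 be a prime. Then (2p^j - 1)(2p^j + 2) does not divide 2p^k + 4p^j + 2. -/
/-!
Write `q = p ^ j`. For `j = 1` the factor `2p + 2` alone cannot divide `2p³ + 4p + 2`, since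
`p + 1 ∣ p³ + 2p + 1` would force `p + 1 ∣ 2`. For `j ≥ 2` we have `p ^ k ≤ q`, and the divisor
`(2q - 1)(2q + 2)`, quadratic in `q`, exceeds the positive linear quantity `2p ^ k + 4q + 2`.
-/

theorem Int.not_two_mul_add_two_dvd_cube (p : ℤ) (hp : 2 ≤ p) :
    ¬ 2 * p + 2 ∣ 2 * p ^ 3 + 4 * p + 2 := by
  intro h
  have h' : p + 1 ∣ p ^ 3 + 2 * p + 1 := by
    rw [show 2 * p + 2 = 2 * (p + 1) by ring,
      show 2 * p ^ 3 + 4 * p + 2 = 2 * (p ^ 3 + 2 * p + 1) by ring] at h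
    exact (mul_dvd_mul_iff_left two_ne_zero).mp h
  have htwo : p + 1 ∣ 2 := by
    have := dvd_sub (dvd_mul_right (p + 1) (p ^ 2 - p + 3)) h'
    rwa [show (p + 1) * (p ^ 2 - p + 3) - (p ^ 3 + 2 * p + 1) = 2 by ring] at this
  have := Int.le_of_dvd two_pos htwo
  omega

theorem Int.not_mul_dvd_of_le (q r : ℤ) (hq : 2 ≤ q) (hr : 0 ≤ r) (hrq : r ≤ q) :
    ¬ (2 * q - 1) * (2 * q + 2) ∣ 2 * r + 4 * q + 2 := by
  intro h
  have := Int.le_of_dvd (by positivity) h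
  nlinarith

theorem stmt_3_general (p j k : ℕ) (hp5 : 5 ≤ p)
    (hj : 0 < j) (hjk : j + k = 4) :
    ¬ ((2 * (p : ℤ) ^ j - 1) * (2 * (p : ℤ) ^ j + 2) ∣
        2 * (p : ℤ) ^ k + 4 * (p : ℤ) ^ j + 2) := by
  have hp : (2 : ℤ) ≤ p := by exact_mod_cast (by omega : 2 ≤ p)
  rcases (by omega : (j = 1 ∧ k = 3) ∨ k ≤ j) with ⟨rfl, rfl⟩ | hkj
  · intro h
    exact Int.not_two_mul_add_two_dvd_cube p hp
      (by simpa only [pow_one] using dvd_of_mul_left_dvd h)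
  · exact Int.not_mul_dvd_of_le _ _ (hp.trans (le_self_pow₀ (by omega) hj.ne'))
      (by positivity) (pow_le_pow_right₀ (by omega) hkj)

theorem stmt_3 (p j k : ℕ) (hp : p.Prime) (hp5 : 5 ≤ p)
    (hj : 0 < j) (hk : 0 < k) (hjk : j + k = 4) :
    ¬ ((2 * (p : ℤ) ^ j - 1) * (2 * (p : ℤ) ^ j + 2) ∣
        2 * (p : ℤ) ^ k + 4 * (p : ℤ) ^ j + 2) :=
  stmt_3_general p j k hp5 hj hjk
end

section
/- Let p ≥ 5 be a prime. Then the equation p·m·n − m − n = p³ has no solutions in positive odd integers m, n. -/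
lemma Int.four_dvd_sub_one_mul_sub_one {a b : ℤ} (ha : Odd a) (hb : Odd b) :
    4 ∣ (a - 1) * (b - 1) := by
  obtain ⟨k, rfl⟩ := ha
  obtain ⟨l, rfl⟩ := hb
  exact ⟨k * l, by ring⟩

lemma Int.not_four_dvd_pow_four_add_one {a : ℤ} (ha : Odd a) : ¬ 4 ∣ a ^ 4 + 1 := by
  obtain ⟨k, rfl⟩ := ha
  rintro ⟨c, hc⟩
  have two_eq : 4 * (c - (4 * k ^ 4 + 8 * k ^ 3 + 6 * k ^ 2 + 2 * k)) = 2 := by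
    linear_combination -hc
  omega

/-- Multiplying by `p` factors the equation as `(p m - 1) (p n - 1) = p ^ 4 + 1`; for odd `p, m, n`
the left side is divisible by `4` while the right side is `2` mod `4`. -/
lemma Int.mul_mul_sub_sub_ne_pow_three {p m n : ℤ} (hp : Odd p) (hm : Odd m) (hn : Odd n) :
    p * m * n - m - n ≠ p ^ 3 := by
  intro h
  have factored : (p * m - 1) * (p * n - 1) = p ^ 4 + 1 := by linear_combination p * h
  exact Int.not_four_dvd_pow_four_add_one hp
    (factored ▸ Int.four_dvd_sub_one_mul_sub_one (hp.mul hm) (hp.mul hn))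

theorem stmt_5 (p : ℕ) (hp : p.Prime) (hp5 : 5 ≤ p) :
    ¬ ∃ m n : ℕ, 0 < m ∧ 0 < n ∧ Odd m ∧ Odd n ∧
      (p : ℤ) * m * n - m - n = (p : ℤ) ^ 3 := by
  rintro ⟨m, n, -, -, hm, hn, h⟩
  have hp_odd : Odd p := hp.odd_of_ne_two (by omega)
  exact Int.mul_mul_sub_sub_ne_pow_three hp_odd.natCast hm.natCast hn.natCast h
end

section
/- Let p ≥ 5 be a prime, d = 1, k = 1, and suppose m, n are positive integers with m ≤ n satisfying p·m·n − m − n = p² and (m−2)(n−2) ≥ 6. Then no such m, n exist; i.e., the equation p·m·n − m − n = p² has no positive integer solutions with 2(m+n) ≤ mn − 2. -/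
/-- If `s` and `t` are the sum and product of the unknowns, the equation reads `s = p * (t - p)`.
Positivity of `s` forces `p > 0` and `t > p`, hence `s ≥ p`; but `t ≥ 2 s + 2` makes `p * t`
far larger than `p ^ 2 + s`. -/
theorem mul_sub_ne_sq_of_two_mul_add_two_le (p s t : ℤ) (hs : 0 < s) (ht : 2 * s + 2 ≤ t) :
    p * t - s ≠ p ^ 2 := by
  intro h
  have hs_eq : s = p * (t - p) := by linear_combination -h
  have hp : 0 < p := by
    by_contra! hp
    nlinarith
  have htp : 0 < t - p := pos_of_mul_pos_right (hs_eq ▸ hs) hp.le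
  have hps : p ≤ s := by nlinarith
  nlinarith

theorem stmt_6_general (p : ℕ) :
    ¬ ∃ m n : ℕ, 0 < m ∧ 0 < n ∧ m ≤ n ∧
      2 * ((m : ℤ) + n) ≤ (m : ℤ) * n - 2 ∧
      (p : ℤ) * m * n - m - n = (p : ℤ) ^ 2 := by
  rintro ⟨m, n, hm, -, -, hmn, heq⟩
  refine mul_sub_ne_sq_of_two_mul_add_two_le p (m + n) (m * n) (by positivity) (by linarith) ?_
  linear_combination heq

theorem stmt_6 (p : ℕ) (hp : p.Prime) (hp5 : 5 ≤ p) :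
    ¬ ∃ m n : ℕ, 0 < m ∧ 0 < n ∧ m ≤ n ∧
      2 * ((m : ℤ) + n) ≤ (m : ℤ) * n - 2 ∧
      (p : ℤ) * m * n - m - n = (p : ℤ) ^ 2 :=
  stmt_6_general p
end

section
/- The complete list of unordered pairs {x, y} of integers with 3 ≤ x ≤ y (or x = 2 excluded; here x, y ≥ 3) such that xy − 2x − 2y > 0 and (xy − 2x − 2y) divides xy is: {3,7}, {3,8}, {3,9}, {3,12}, {3,15}, {3,24}, {4,5}, {4,6}, {4,8}, {4,12}, {5,5}, {5,20}, {6,6}, {6,12}, {8,8}. -/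
/-!
Put `d = xy - 2x - 2y`. Since `xy = d + 2(x + y)`, `d` divides `xy` exactly when it divides
`2(x + y)`; then `d ≤ 2(x + y) ≤ 4y` forces `x ≤ 8`. Moreover `d` divides
`x · 2(x + y) - 2 · xy = 2x²`, and `(x - 2)y - 2x ≤ 2x²` gives `y ≤ 24` for `3 ≤ x ≤ 8`.
What remains is a finite search.
-/

theorem dvd_mul_iff_dvd_two_mul_add {R : Type*} [CommRing R] (x y : R) :
    x * y - 2 * x - 2 * y ∣ x * y ↔ x * y - 2 * x - 2 * y ∣ 2 * (x + y) := by
  convert dvd_add_right (dvd_refl (x * y - 2 * x - 2 * y)) (c := 2 * (x + y)) using 2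
  ring

theorem dvd_two_mul_sq_of_dvd_mul {R : Type*} [CommRing R] {x y : R}
    (h : x * y - 2 * x - 2 * y ∣ x * y) : x * y - 2 * x - 2 * y ∣ 2 * x ^ 2 := by
  have hsum := (dvd_mul_iff_dvd_two_mul_add x y).1 h
  rw [show 2 * x ^ 2 = x * (2 * (x + y)) - 2 * (x * y) by ring]
  exact dvd_sub (hsum.mul_left x) (h.mul_left 2)

theorem le_eight_and_le_twentyFour_of_dvd {x y : ℤ} (hx : 3 ≤ x) (hxy : x ≤ y)
    (hdvd : x * y - 2 * x - 2 * y ∣ x * y) :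
    x ≤ 8 ∧ y ≤ 24 := by
  have hsum : x * y - 2 * x - 2 * y ≤ 2 * (x + y) :=
    Int.le_of_dvd (by omega) ((dvd_mul_iff_dvd_two_mul_add x y).1 hdvd)
  have hsq : x * y - 2 * x - 2 * y ≤ 2 * x ^ 2 :=
    Int.le_of_dvd (by positivity) (dvd_two_mul_sq_of_dvd_mul hdvd)
  have hx8 : x ≤ 8 := by nlinarith
  exact ⟨hx8, by nlinarith⟩

theorem stmt_14 (x y : ℤ) (hx : 3 ≤ x) (hxy : x ≤ y) :
    (0 < x * y - 2 * x - 2 * y ∧ (x * y - 2 * x - 2 * y) ∣ x * y) ↔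
      (x, y) ∈ ({(3, 7), (3, 8), (3, 9), (3, 12), (3, 15), (3, 24),
        (4, 5), (4, 6), (4, 8), (4, 12), (5, 5), (5, 20),
        (6, 6), (6, 12), (8, 8)} : Set (ℤ × ℤ)) := by
  simp only [Set.mem_insert_iff, Set.mem_singleton_iff, Prod.mk.injEq]
  constructor
  · rintro ⟨hpos, hdvd⟩
    obtain ⟨hx8, hy24⟩ := le_eight_and_le_twentyFour_of_dvd hx hxy hdvd
    revert hpos hdvd
    interval_cases x <;> interval_cases y <;> decide
  · intro hmem
    have hx8 : x ≤ 8 := by omega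
    have hy24 : y ≤ 24 := by omega
    revert hmem
    interval_cases x <;> interval_cases y <;> decide
end
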